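/- Let A ∈ ℝ^{n×n}, B ∈ ℝ^{n×m}, H ≥ 1, and suppose P_H(A,B) = [A^{H−1}B, …, B] ∈ ℝ^{n×Hm} has full row rank n. Let C ∈ ℝ^{n×n} and D ∈ ℝ^{m×m} be symmetric positive definite, let 𝐂 = I_H ⊗ C and 𝐃 = I_H ⊗ D be their block-diagonal lifts, and define F = [𝐂·G_u(A,B); 𝐃]·(I − P_H(A,B)⁺·P_H(A,B)) ∈ ℝ^{(Hn+Hm)×Hm}, where the first factor stacks 𝐂·G_u(A,B) on top of 𝐃. Then ‖F⁺‖₂ ≤ 1/σ_min(D), where σ_min(D) is the smallest singular value of D. -/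

import Mathlib

open Matrix
open scoped Matrix.Norms.L2Operator Kronecker

/-- `Xp` is the Moore–Penrose pseudoinverse of `X`: the four Penrose conditions. -/
def IsMoorePenrose {α β : Type*} [Fintype α] [Fintype β] [DecidableEq α] [DecidableEq β]
    (X : Matrix α β ℝ) (Xp : Matrix β α ℝ) : Prop :=
  X * Xp * X = X ∧ Xp * X * Xp = Xp ∧ (X * Xp)ᵀ = X * Xp ∧ (Xp * X)ᵀ = Xp * X

/-- The Euclidean norm of a finitely-indexed real vector. -/
noncomputable def evnorm {ι : Type*} [Fintype ι] (v : ι → ℝ) : ℝ :=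
  Real.sqrt (∑ i, v i ^ 2)

/-- The smallest singular value of a matrix, `σ_min(X) = inf_{‖z‖=1} ‖Xz‖` in Euclidean norms. -/
noncomputable def sigmaMin {α : Type*} [Fintype α] {q : ℕ} (X : Matrix α (Fin q) ℝ) : ℝ :=
  ⨅ z : { z : Fin q → ℝ // evnorm z = 1 }, evnorm (X.mulVec z)

/-- The block lower-triangular Toeplitz matrix `G_u(A,B) ∈ ℝ^{Hn×Hm}` whose `(i,j)` block
(for `j ≤ i`) is `A^{i−j}B` and whose blocks above the block diagonal are zero. -/
def Gu {n m : ℕ} (H : ℕ) (A : Matrix (Fin n) (Fin n) ℝ) (B : Matrix (Fin n) (Fin m) ℝ) :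
    Matrix (Fin H × Fin n) (Fin H × Fin m) ℝ :=
  Matrix.of fun p q =>
    if (q.1 : ℕ) ≤ (p.1 : ℕ) then (A ^ ((p.1 : ℕ) - (q.1 : ℕ)) * B) p.2 q.2 else 0

/-- The `H`-step controllability matrix `P_H(A,B) = [A^{H−1}B, …, B] ∈ ℝ^{n×Hm}`. -/
def PH {n m : ℕ} (H : ℕ) (A : Matrix (Fin n) (Fin n) ℝ) (B : Matrix (Fin n) (Fin m) ℝ) :
    Matrix (Fin n) (Fin H × Fin m) ℝ :=
  Matrix.of fun i q => (A ^ (H - 1 - (q.1 : ℕ)) * B) i q.2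

/-! `F⁺` maps into the row space of `F = M Π`, where `M = [𝐂 G_u; 𝐃]` and `Π = I − P⁺P` is an
orthogonal projection, so `Π F⁺ = F⁺`. Since `F F⁺` is an orthogonal projection, for every `y`
`‖y‖ ≥ ‖F F⁺ y‖ = ‖M F⁺ y‖ ≥ ‖𝐃 F⁺ y‖ ≥ σ_min(D) ‖F⁺ y‖`, and `σ_min(D) > 0` as `D` is
invertible. -/

section Evnorm

variable {ι : Type*} [Fintype ι]

lemma evnorm_eq_norm (v : ι → ℝ) : evnorm v = ‖(WithLp.toLp 2 v : EuclideanSpace ℝ ι)‖ := by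
  simp [evnorm, EuclideanSpace.norm_eq]

lemma evnorm_nonneg (v : ι → ℝ) : 0 ≤ evnorm v := Real.sqrt_nonneg _

lemma evnorm_sq (v : ι → ℝ) : evnorm v ^ 2 = ∑ i, v i ^ 2 :=
  Real.sq_sqrt (Finset.sum_nonneg fun _ _ => sq_nonneg _)

lemma evnorm_smul (c : ℝ) (v : ι → ℝ) : evnorm (c • v) = |c| * evnorm v := by
  simp only [evnorm_eq_norm, WithLp.toLp_smul, norm_smul, Real.norm_eq_abs]

lemma evnorm_single (i : ι) [DecidableEq ι] : evnorm (Pi.single i (1 : ℝ)) = 1 := by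
  simp [evnorm, Pi.single_apply, ite_pow]

variable {κ : Type*} [Fintype κ]

lemma evnorm_mulVec_le [DecidableEq ι] (X : Matrix κ ι ℝ) (v : ι → ℝ) :
    evnorm (X *ᵥ v) ≤ ‖X‖ * evnorm v := by
  rw [evnorm_eq_norm, evnorm_eq_norm]
  exact X.l2_opNorm_mulVec (WithLp.toLp 2 v)

lemma l2_opNorm_le_of_evnorm_mulVec_le [DecidableEq ι] (X : Matrix κ ι ℝ) {c : ℝ} (hc : 0 ≤ c)
    (h : ∀ v, evnorm (X *ᵥ v) ≤ c * evnorm v) : ‖X‖ ≤ c := by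
  refine ContinuousLinearMap.opNorm_le_bound _ hc fun x => ?_
  simpa [evnorm_eq_norm, Matrix.toLpLin_apply] using h x.ofLp

lemma evnorm_mulVec_le_fromRows {ι' : Type*} [Fintype ι'] (X : Matrix ι' κ ℝ)
    (Y : Matrix ι κ ℝ) (v : κ → ℝ) : evnorm (Y *ᵥ v) ≤ evnorm (fromRows X Y *ᵥ v) := by
  refine Real.sqrt_le_sqrt ?_
  rw [fromRows_mulVec, Fintype.sum_sum_type]
  exact le_add_of_nonneg_left (Finset.sum_nonneg fun _ _ => sq_nonneg _)

end Evnorm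

lemma isSelfAdjoint_iff_transpose_eq {ι : Type*} {Q : Matrix ι ι ℝ} :
    IsSelfAdjoint Q ↔ Qᵀ = Q := by
  rw [IsSelfAdjoint, star_eq_conjTranspose, conjTranspose_eq_transpose_of_trivial]

lemma evnorm_mulVec_le_of_isStarProjection {ι : Type*} [Fintype ι] [DecidableEq ι]
    {Q : Matrix ι ι ℝ} (hQ : IsStarProjection Q) (v : ι → ℝ) : evnorm (Q *ᵥ v) ≤ evnorm v :=
  (evnorm_mulVec_le Q v).trans <| mul_le_of_le_one_left (evnorm_nonneg v) (hQ.norm_le Q)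

namespace IsMoorePenrose

variable {α β : Type*} [Fintype α] [Fintype β] [DecidableEq α] [DecidableEq β]
  {X : Matrix α β ℝ} {Xp : Matrix β α ℝ}

lemma isStarProjection_mul_pinv (h : IsMoorePenrose X Xp) : IsStarProjection (X * Xp) where
  isIdempotentElem := by rw [IsIdempotentElem, ← Matrix.mul_assoc, h.1]
  isSelfAdjoint := isSelfAdjoint_iff_transpose_eq.2 h.2.2.1

lemma isStarProjection_pinv_mul (h : IsMoorePenrose X Xp) : IsStarProjection (Xp * X) where
  isIdempotentElem := by rw [IsIdempotentElem, ← Matrix.mul_assoc, h.2.1]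
  isSelfAdjoint := isSelfAdjoint_iff_transpose_eq.2 h.2.2.2

lemma pinv_eq_transpose_mul (h : IsMoorePenrose X Xp) : Xp = Xᵀ * (Xpᵀ * Xp) := by
  conv_lhs => rw [← h.2.1, ← h.2.2.2]
  rw [transpose_mul, Matrix.mul_assoc]

/-- The range of `Xp` is the row space of `X`, which lies in the range of `Q` when `X = M Q`. -/
lemma proj_mul_pinv {M : Matrix α β ℝ} {Q : Matrix β β ℝ} (hQ : IsStarProjection Q)
    (h : IsMoorePenrose (M * Q) Xp) : Q * Xp = Xp := by
  have hQt : Qᵀ = Q := isSelfAdjoint_iff_transpose_eq.1 hQ.isSelfAdjoint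
  rw [h.pinv_eq_transpose_mul, transpose_mul, hQt]
  simp only [← Matrix.mul_assoc, hQ.isIdempotentElem.eq]

lemma l2_opNorm_le_of_mul_proj {M : Matrix α β ℝ} {Q : Matrix β β ℝ} (hQ : IsStarProjection Q)
    (h : IsMoorePenrose (M * Q) Xp) {s : ℝ} (hs : 0 < s)
    (hM : ∀ v, s * evnorm v ≤ evnorm (M *ᵥ v)) : ‖Xp‖ ≤ 1 / s := by
  refine l2_opNorm_le_of_evnorm_mulVec_le Xp (one_div_nonneg.2 hs.le) fun y => ?_
  have hproj : M *ᵥ (Xp *ᵥ y) = (M * Q * Xp) *ᵥ y := by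
    rw [Matrix.mul_assoc, proj_mul_pinv hQ h, mulVec_mulVec]
  rw [div_mul_eq_mul_div, one_mul, le_div_iff₀' hs]
  calc s * evnorm (Xp *ᵥ y) ≤ evnorm (M *ᵥ (Xp *ᵥ y)) := hM _
    _ = evnorm ((M * Q * Xp) *ᵥ y) := by rw [hproj]
    _ ≤ evnorm y := evnorm_mulVec_le_of_isStarProjection h.isStarProjection_mul_pinv y

end IsMoorePenrose

lemma one_kronecker_mulVec_apply {ι α κ : Type*} [Fintype ι] [DecidableEq ι] [Fintype κ]
    (D : Matrix α κ ℝ) (w : ι × κ → ℝ) (p : ι × α) :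
    (((1 : Matrix ι ι ℝ) ⊗ₖ D) *ᵥ w) p = (D *ᵥ fun j => w (p.1, j)) p.2 := by
  simp [mulVec, dotProduct, Fintype.sum_prod_type, one_apply, ite_mul]

section SigmaMin

variable {α : Type*} [Fintype α] {q : ℕ}

lemma sigmaMin_nonneg (X : Matrix α (Fin q) ℝ) : 0 ≤ sigmaMin X :=
  Real.iInf_nonneg fun _ => evnorm_nonneg _

lemma sigmaMin_mul_evnorm_le (X : Matrix α (Fin q) ℝ) (v : Fin q → ℝ) :
    sigmaMin X * evnorm v ≤ evnorm (X *ᵥ v) := by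
  rcases eq_or_ne v 0 with rfl | hv
  · simp [evnorm]
  have hpos : 0 < evnorm v := by simpa [evnorm_eq_norm] using hv
  have hunit : evnorm ((evnorm v)⁻¹ • v) = 1 := by
    rw [evnorm_smul, abs_of_pos (inv_pos.2 hpos), inv_mul_cancel₀ hpos.ne']
  have hle : sigmaMin X ≤ (evnorm v)⁻¹ * evnorm (X *ᵥ v) := by
    have hbdd : BddBelow (Set.range fun z : {z : Fin q → ℝ // evnorm z = 1} =>
        evnorm (X *ᵥ (z : Fin q → ℝ))) := ⟨0, by rintro _ ⟨z, rfl⟩; exact evnorm_nonneg _⟩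
    simpa [sigmaMin, mulVec_smul, evnorm_smul, abs_of_pos hpos] using ciInf_le hbdd ⟨_, hunit⟩
  rwa [← le_div_iff₀ hpos, div_eq_inv_mul]

/-- A left inverse `Y` of `X` gives `σ_min(X) ≥ 1 / ‖Y‖`. -/
lemma sigmaMin_pos [DecidableEq α] [NeZero q] {X : Matrix α (Fin q) ℝ} {Y : Matrix (Fin q) α ℝ}
    (hYX : Y * X = 1) : 0 < sigmaMin X := by
  have hY : 0 < ‖Y‖ := norm_pos_iff.2 fun h0 => by simp [h0] at hYX
  have : Nonempty {z : Fin q → ℝ // evnorm z = 1} := ⟨⟨_, evnorm_single 0⟩⟩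
  refine (inv_pos.2 hY).trans_le (le_ciInf fun z => ?_)
  rw [inv_le_iff_one_le_mul₀' hY]
  calc (1 : ℝ) = evnorm (Y *ᵥ (X *ᵥ z)) := by rw [mulVec_mulVec, hYX, one_mulVec, z.2]
    _ ≤ ‖Y‖ * evnorm (X *ᵥ z) := evnorm_mulVec_le Y _

lemma sigmaMin_mul_evnorm_le_one_kronecker {ι : Type*} [Fintype ι] [DecidableEq ι]
    (D : Matrix α (Fin q) ℝ) (w : ι × Fin q → ℝ) :
    sigmaMin D * evnorm w ≤ evnorm (((1 : Matrix ι ι ℝ) ⊗ₖ D) *ᵥ w) := by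
  refine le_of_pow_le_pow_left₀ two_ne_zero (evnorm_nonneg _) ?_
  rw [mul_pow, evnorm_sq, evnorm_sq, Fintype.sum_prod_type, Fintype.sum_prod_type, Finset.mul_sum]
  refine Finset.sum_le_sum fun h _ => ?_
  have hblock := pow_le_pow_left₀ (mul_nonneg (sigmaMin_nonneg D) (evnorm_nonneg _))
    (sigmaMin_mul_evnorm_le D fun j => w (h, j)) 2
  simpa only [mul_pow, evnorm_sq, one_kronecker_mulVec_apply] using hblock

end SigmaMin

theorem F_pinv_opNorm_le_general
    {n m : ℕ} (H : ℕ)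
    (A : Matrix (Fin n) (Fin n) ℝ) (B : Matrix (Fin n) (Fin m) ℝ)
    (C : Matrix (Fin n) (Fin n) ℝ) (D : Matrix (Fin m) (Fin m) ℝ)
    (hD : D.PosDef)
    (Pp : Matrix (Fin H × Fin m) (Fin n) ℝ) (hPp : IsMoorePenrose (PH H A B) Pp)
    (F : Matrix ((Fin H × Fin n) ⊕ (Fin H × Fin m)) (Fin H × Fin m) ℝ)
    (hF : F = Matrix.fromRows (((1 : Matrix (Fin H) (Fin H) ℝ) ⊗ₖ C) * Gu H A B)
        ((1 : Matrix (Fin H) (Fin H) ℝ) ⊗ₖ D) * (1 - Pp * PH H A B))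
    (Fp : Matrix (Fin H × Fin m) ((Fin H × Fin n) ⊕ (Fin H × Fin m)) ℝ)
    (hFp : IsMoorePenrose F Fp) :
    ‖Fp‖ ≤ 1 / sigmaMin D := by
  rcases Nat.eq_zero_or_pos m with rfl | hm
  · rw [Subsingleton.elim Fp 0, norm_zero]
    exact one_div_nonneg.2 (sigmaMin_nonneg D)
  have : NeZero m := ⟨hm.ne'⟩
  have hσ : 0 < sigmaMin D :=
    sigmaMin_pos (nonsing_inv_mul D (isUnit_iff_ne_zero.2 hD.det_pos.ne'))
  subst hF
  refine hFp.l2_opNorm_le_of_mul_proj hPp.isStarProjection_pinv_mul.one_sub hσ fun v => ?_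
  exact (sigmaMin_mul_evnorm_le_one_kronecker D v).trans (evnorm_mulVec_le_fromRows _ _ v)

/-- Let `P_H(A,B)` have full row rank `n`, let `C`, `D` be symmetric positive definite, and let
`F = [𝐂·G_u(A,B); 𝐃]·(I − P_H⁺ P_H)` with `𝐂 = I_H ⊗ C`, `𝐃 = I_H ⊗ D`.
Then `‖F⁺‖₂ ≤ 1/σ_min(D)`. -/
theorem F_pinv_opNorm_le
    {n m : ℕ} (H : ℕ) (hH : 1 ≤ H)
    (A : Matrix (Fin n) (Fin n) ℝ) (B : Matrix (Fin n) (Fin m) ℝ)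
    (C : Matrix (Fin n) (Fin n) ℝ) (D : Matrix (Fin m) (Fin m) ℝ)
    (hC : C.PosDef) (hD : D.PosDef)
    (hrank : (PH H A B).rank = n)
    (Pp : Matrix (Fin H × Fin m) (Fin n) ℝ) (hPp : IsMoorePenrose (PH H A B) Pp)
    (F : Matrix ((Fin H × Fin n) ⊕ (Fin H × Fin m)) (Fin H × Fin m) ℝ)
    (hF : F = Matrix.fromRows (((1 : Matrix (Fin H) (Fin H) ℝ) ⊗ₖ C) * Gu H A B)
        ((1 : Matrix (Fin H) (Fin H) ℝ) ⊗ₖ D) * (1 - Pp * PH H A B))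
    (Fp : Matrix (Fin H × Fin m) ((Fin H × Fin n) ⊕ (Fin H × Fin m)) ℝ)
    (hFp : IsMoorePenrose F Fp) :
    ‖Fp‖ ≤ 1 / sigmaMin D :=
  F_pinv_opNorm_le_general H A B C D hD Pp hPp F hF Fp hFp
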